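/- Let a ≥ 0, n ∈ ℕ, r ∈ ℕ₀, and let T_{n,r}^a(x) = K_n^a(t^r;x) denote the r-th order moment of the generalized Baskakov Kantorovich operator. Then for all x ≥ 0, T_{n,r}^a(x) = (1/(r+1))·Σ_{j=0}^{r} C(r+1,j)·(n+1)^{j−r}·ν_{n,j}^a(x), where ν_{n,j}^a(x) = Σ_{k=0}^{∞} W_{n,k}^a(x)·(k/(n+1))^j. In particular, T_{n,0}^a(x) = 1, T_{n,1}^a(x) = (1/(n+1))·(nx + ax/(1+x) + 1/2), and T_{n,2}^a(x) = (1/(n+1)²)·(n²x² + n(x² + 2x + 2ax²/(1+x)) + a²x²/(1+x)² + 2ax/(1+x) + 1/3). -/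

import Mathlib

open MeasureTheory Filter

noncomputable section

/-- Rising factorial `(n)_i = n(n+1)⋯(n+i-1)`, with `(n)_0 = 1`. -/
def risingFac (n : ℕ) : ℕ → ℝ
  | 0 => 1
  | i + 1 => risingFac n i * ((n : ℝ) + i)

/-- `P_k(n,a) = Σ_{i=0}^{k} C(k,i) (n)_i a^(k-i)`. -/
def Pba (k n : ℕ) (a : ℝ) : ℝ :=
  ∑ i ∈ Finset.range (k + 1), (k.choose i : ℝ) * risingFac n i * a ^ (k - i)

/-- Generalized Baskakov basis function `W_{n,k}^a(x)`. -/
def Wgb (a : ℝ) (n k : ℕ) (x : ℝ) : ℝ :=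
  Real.exp (-(a * x) / (1 + x)) * (Pba k n a / (Nat.factorial k : ℝ)) * x ^ k /
    (1 + x) ^ (n + k)

/-- Generalized Baskakov–Kantorovich operator `K_n^a(f;x)`. -/
def Kgb (a : ℝ) (n : ℕ) (f : ℝ → ℝ) (x : ℝ) : ℝ :=
  ((n : ℝ) + 1) * ∑' k : ℕ,
    Wgb a n k x * ∫ t in ((k : ℝ) / ((n : ℝ) + 1))..(((k : ℝ) + 1) / ((n : ℝ) + 1)), f t


/-- `r`-th order moment `ν_{n,r}^a(x)` of the generalized Baskakov operator. -/
def nuMoment (a : ℝ) (n r : ℕ) (x : ℝ) : ℝ :=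
  ∑' k : ℕ, Wgb a n k x * ((k : ℝ) / ((n : ℝ) + 1)) ^ r

/-- `r`-th order moment `T_{n,r}^a(x) = K_n^a(t^r;x)` of the Kantorovich operator. -/
def TMoment (a : ℝ) (n r : ℕ) (x : ℝ) : ℝ :=
  Kgb a n (fun t => t ^ r) x


/-!
With `y = x/(1+x)` one has `W_{n,k}^a(x) = e^{-ay} (1-y)^n c_k y^k`, where `c_k = P_k(n,a)/k!` are
the Taylor coefficients of `G_n(y) = e^{ay} (1-y)^{-n}`: indeed `P_k(n,a)/k!` is the Cauchy
product coefficient of the exponential series and the negative binomial series. The identity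
`G_n' = a G_n + n G_{n+1}` becomes the recurrence `(k+1) c_{k+1}(n) = a c_k(n) + n c_k(n+1)`, which
gives the first two moments `Σ k^m c_k y^k` in closed form. The Kantorovich moments reduce to the
discrete ones by integrating `t^r` over `[k/(n+1), (k+1)/(n+1)]` and expanding
`(k+1)^{r+1} - k^{r+1}` binomially.
-/

open Finset
open scoped Nat

lemma risingFac_eq_ascFactorial (n i : ℕ) : risingFac n i = (n.ascFactorial i : ℝ) := by
  induction i with
  | zero => simp [risingFac]
  | succ i ih => rw [risingFac, ih, Nat.ascFactorial_succ]; push_cast; ring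

lemma risingFac_succ_eq_mul (n i : ℕ) : risingFac n (i + 1) = n * risingFac (n + 1) i := by
  simp only [risingFac_eq_ascFactorial, ← Nat.succ_eq_add_one, ← Nat.cast_mul,
    Nat.succ_ascFactorial, Nat.ascFactorial_succ]

-- Pascal's rule on `C(k+1, i)`, together with `(n)_{i+1} = n (n+1)_i`.
lemma Pba_succ (k n : ℕ) (a : ℝ) : Pba (k + 1) n a = a * Pba k n a + n * Pba k (n + 1) a := by
  have hsplit : Pba (k + 1) n a =
      (∑ i ∈ range (k + 2), (k.choose i : ℝ) * risingFac n i * a ^ (k + 1 - i)) +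
        ∑ i ∈ range (k + 1), (k.choose i : ℝ) * risingFac n (i + 1) * a ^ (k - i) := by
    rw [Pba, sum_range_succ', sum_range_succ' _ (k + 1)]
    simp only [Nat.choose_succ_succ', Nat.cast_add, add_mul, sum_add_distrib, Nat.choose_zero_right,
      Nat.add_sub_add_right]
    ring
  rw [hsplit, sum_range_succ, Nat.choose_succ_self, Pba, Pba, mul_sum, mul_sum]
  simp only [Nat.cast_zero, zero_mul, add_zero, risingFac_succ_eq_mul]
  congr 1 <;> refine sum_congr rfl fun i hi => ?_
  · rw [Nat.sub_add_comm (Nat.lt_succ_iff.mp (mem_range.mp hi)), pow_succ]; ring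
  · ring

def baskakovCoeff (n : ℕ) (a : ℝ) (k : ℕ) : ℝ := Pba k n a / k !

lemma succ_mul_baskakovCoeff_succ (n : ℕ) (a : ℝ) (k : ℕ) :
    ((k : ℝ) + 1) * baskakovCoeff n a (k + 1) =
      a * baskakovCoeff n a k + n * baskakovCoeff (n + 1) a k := by
  simp only [baskakovCoeff, Pba_succ, Nat.factorial_succ, Nat.cast_mul]
  field_simp
  push_cast
  ring

lemma baskakovCoeff_mul_pow_eq_sum (n : ℕ) (a y : ℝ) (k : ℕ) :
    baskakovCoeff n a k * y ^ k =
      ∑ i ∈ range (k + 1), risingFac n i / i ! * y ^ i * ((a * y) ^ (k - i) / (k - i)!) := by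
  rw [baskakovCoeff, Pba, sum_div, sum_mul]
  refine sum_congr rfl fun i hi => ?_
  have hik : i ≤ k := Nat.lt_succ_iff.mp (mem_range.mp hi)
  rw [Nat.cast_choose ℝ hik, mul_pow, ← Nat.add_sub_cancel' hik, pow_add,
    Nat.add_sub_cancel_left]
  field_simp

lemma hasSum_risingFac_div_factorial_mul_pow (n : ℕ) {y : ℝ} (hy : |y| < 1) :
    HasSum (fun i => risingFac n i / i ! * y ^ i) ((1 - y) ^ n)⁻¹ := by
  cases n with
  | zero =>
    convert hasSum_single (f := fun i => risingFac 0 i / i ! * y ^ i) 0 fun i hi => ?_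
    · simp [risingFac]
    · obtain ⟨i, rfl⟩ := Nat.exists_eq_succ_of_ne_zero hi
      simp [risingFac_eq_ascFactorial, Nat.zero_ascFactorial]
  | succ m =>
    have h := hasSum_choose_mul_geometric_of_norm_lt_one m (by rwa [Real.norm_eq_abs])
    rw [one_div] at h
    refine h.congr_fun fun i => ?_
    rw [risingFac_eq_ascFactorial, Nat.ascFactorial_eq_factorial_mul_choose, add_comm m i,
      Nat.choose_symm_add]
    push_cast
    field_simp

lemma hasSum_baskakovCoeff_mul_pow (n : ℕ) (a : ℝ) {y : ℝ} (hy : |y| < 1) :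
    HasSum (fun k => baskakovCoeff n a k * y ^ k) (Real.exp (a * y) / (1 - y) ^ n) := by
  have hA := hasSum_risingFac_div_factorial_mul_pow n hy
  have hE : HasSum (fun j => (a * y) ^ j / j !) (Real.exp (a * y)) := by
    simpa [Real.exp_eq_exp_ℝ] using NormedSpace.expSeries_div_hasSum_exp (a * y)
  have h := hasSum_sum_range_mul_of_summable_norm hA.summable.norm hE.summable.norm
  rw [hA.tsum_eq, hE.tsum_eq, inv_mul_eq_div] at h
  simpa only [baskakovCoeff_mul_pow_eq_sum] using h

lemma summable_pow_mul_mul_pow_of_summable {c : ℕ → ℝ} {y ρ : ℝ}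
    (hc : Summable fun k => c k * ρ ^ k) (hyρ : |y| < |ρ|) (m : ℕ) :
    Summable fun k : ℕ => (k : ℝ) ^ m * c k * y ^ k := by
  have hρ : 0 < |ρ| := (abs_nonneg y).trans_lt hyρ
  have hr : |(|y| / |ρ|)| < 1 := by
    rwa [abs_div, abs_abs, abs_abs, div_lt_one hρ]
  refine .of_norm_bounded_eventually_nat hc.abs ?_
  filter_upwards [(tendsto_pow_const_mul_const_pow_of_abs_lt_one m hr).eventually_le_const
    one_pos] with k hk
  calc ‖(k : ℝ) ^ m * c k * y ^ k‖ = (k : ℝ) ^ m * (|y| / |ρ|) ^ k * |c k * ρ ^ k| := by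
        rw [Real.norm_eq_abs, abs_mul, abs_mul, abs_mul, abs_pow, abs_pow, abs_pow, div_pow,
          Nat.abs_cast]
        field_simp
    _ ≤ |c k * ρ ^ k| := mul_le_of_le_one_left (abs_nonneg _) hk

lemma summable_pow_mul_baskakovCoeff_mul_pow (n m : ℕ) (a : ℝ) {y : ℝ} (hy : |y| < 1) :
    Summable fun k : ℕ => (k : ℝ) ^ m * baskakovCoeff n a k * y ^ k := by
  have hρ : |(1 + |y|) / 2| = (1 + |y|) / 2 := abs_of_pos (by positivity)
  exact summable_pow_mul_mul_pow_of_summable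
    (hasSum_baskakovCoeff_mul_pow n a (by rw [hρ]; linarith)).summable (by rw [hρ]; linarith) m

lemma hasSum_pow_succ_mul_baskakovCoeff_mul_pow {n m : ℕ} {a y A B : ℝ}
    (hA : HasSum (fun k : ℕ => ((k : ℝ) + 1) ^ m * baskakovCoeff n a k * y ^ k) A)
    (hB : HasSum (fun k : ℕ => ((k : ℝ) + 1) ^ m * baskakovCoeff (n + 1) a k * y ^ k) B) :
    HasSum (fun k : ℕ => (k : ℝ) ^ (m + 1) * baskakovCoeff n a k * y ^ k)
      (y * (a * A + n * B)) := by
  rw [← hasSum_nat_add_iff' 1]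
  simp only [range_one, sum_singleton, Nat.cast_zero, zero_pow m.succ_ne_zero, zero_mul,
    sub_zero]
  refine (((hA.mul_left a).add (hB.mul_left (n : ℝ))).mul_left y).congr_fun fun k => ?_
  push_cast
  rw [pow_succ, pow_succ, mul_assoc _ ((k : ℝ) + 1), succ_mul_baskakovCoeff_succ]
  ring

lemma hasSum_pow_one_mul_baskakovCoeff_mul_pow (n : ℕ) (a : ℝ) {y : ℝ} (hy : |y| < 1) :
    HasSum (fun k : ℕ => (k : ℝ) ^ 1 * baskakovCoeff n a k * y ^ k)
      (Real.exp (a * y) / (1 - y) ^ n * (a * y + n * y / (1 - y))) := by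
  have hy₁ : 1 - y ≠ 0 := by linarith [le_abs_self y]
  convert hasSum_pow_succ_mul_baskakovCoeff_mul_pow (m := 0)
    (by simpa using hasSum_baskakovCoeff_mul_pow n a hy)
    (by simpa using hasSum_baskakovCoeff_mul_pow (n + 1) a hy) using 1
  field_simp
  ring

-- Squared mean plus variance of the sum of independent Poisson(`ay`) and
-- negative binomial(`n`, `y`) variables.
lemma hasSum_pow_two_mul_baskakovCoeff_mul_pow (n : ℕ) (a : ℝ) {y : ℝ} (hy : |y| < 1) :
    HasSum (fun k : ℕ => (k : ℝ) ^ 2 * baskakovCoeff n a k * y ^ k)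
      (Real.exp (a * y) / (1 - y) ^ n *
        ((a * y + n * y / (1 - y)) ^ 2 + a * y + n * y / (1 - y) ^ 2)) := by
  have hy₁ : 1 - y ≠ 0 := by linarith [le_abs_self y]
  have hfirst (n : ℕ) := (hasSum_pow_one_mul_baskakovCoeff_mul_pow n a hy).add
    (hasSum_baskakovCoeff_mul_pow n a hy)
  convert hasSum_pow_succ_mul_baskakovCoeff_mul_pow (m := 1) ((hfirst n).congr_fun ?_)
    ((hfirst (n + 1)).congr_fun ?_) using 1
  · push_cast
    field_simp
    ring
  all_goals intro k; ring

lemma abs_div_one_add_lt_one {x : ℝ} (hx : 0 ≤ x) : |x / (1 + x)| < 1 := by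
  rw [abs_of_nonneg (by positivity), div_lt_one (by positivity)]
  linarith

lemma Wgb_mul_pow_eq {x : ℝ} (hx : 1 + x ≠ 0) (a : ℝ) (n k j : ℕ) :
    Wgb a n k x * ((k : ℝ) / (n + 1)) ^ j =
      Real.exp (-(a * (x / (1 + x)))) / (1 + x) ^ n / ((n : ℝ) + 1) ^ j *
        ((k : ℝ) ^ j * baskakovCoeff n a k * (x / (1 + x)) ^ k) := by
  rw [Wgb, baskakovCoeff, neg_div, mul_div_assoc, div_pow, div_pow, pow_add]
  field_simp

lemma nuMoment_eq_tsum {x : ℝ} (hx : 1 + x ≠ 0) (a : ℝ) (n j : ℕ) :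
    nuMoment a n j x = Real.exp (-(a * (x / (1 + x)))) / (1 + x) ^ n / ((n : ℝ) + 1) ^ j *
      ∑' k : ℕ, (k : ℝ) ^ j * baskakovCoeff n a k * (x / (1 + x)) ^ k := by
  simp only [nuMoment, Wgb_mul_pow_eq hx, tsum_mul_left]

lemma summable_Wgb_mul_pow {x : ℝ} (hx : 0 ≤ x) (a : ℝ) (n j : ℕ) :
    Summable fun k : ℕ => Wgb a n k x * ((k : ℝ) / (n + 1)) ^ j := by
  simp only [Wgb_mul_pow_eq (by positivity : 1 + x ≠ 0)]
  exact (summable_pow_mul_baskakovCoeff_mul_pow n j a (abs_div_one_add_lt_one hx)).mul_left _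

lemma one_sub_div_one_add {x : ℝ} (hx : 1 + x ≠ 0) : 1 - x / (1 + x) = (1 + x)⁻¹ := by
  field_simp
  ring

lemma nuMoment_zero {x : ℝ} (hx : 0 ≤ x) (a : ℝ) (n : ℕ) : nuMoment a n 0 x = 1 := by
  have hx₁ : 1 + x ≠ 0 := by positivity
  simp only [nuMoment_eq_tsum hx₁, pow_zero, one_mul,
    (hasSum_baskakovCoeff_mul_pow n a (abs_div_one_add_lt_one hx)).tsum_eq,
    one_sub_div_one_add hx₁, Real.exp_neg, inv_pow]
  field_simp

lemma nuMoment_one {x : ℝ} (hx : 0 ≤ x) (a : ℝ) (n : ℕ) :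
    nuMoment a n 1 x = (n * x + a * x / (1 + x)) / (n + 1) := by
  have hx₁ : 1 + x ≠ 0 := by positivity
  rw [nuMoment_eq_tsum hx₁,
    (hasSum_pow_one_mul_baskakovCoeff_mul_pow n a (abs_div_one_add_lt_one hx)).tsum_eq,
    one_sub_div_one_add hx₁, Real.exp_neg, inv_pow]
  field_simp
  ring

lemma nuMoment_two {x : ℝ} (hx : 0 ≤ x) (a : ℝ) (n : ℕ) :
    nuMoment a n 2 x =
      ((n * x + a * x / (1 + x)) ^ 2 + n * x * (1 + x) + a * x / (1 + x)) / (n + 1) ^ 2 := by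
  have hx₁ : 1 + x ≠ 0 := by positivity
  rw [nuMoment_eq_tsum hx₁,
    (hasSum_pow_two_mul_baskakovCoeff_mul_pow n a (abs_div_one_add_lt_one hx)).tsum_eq,
    one_sub_div_one_add hx₁, Real.exp_neg, inv_pow]
  field_simp
  ring

lemma add_one_pow_succ_sub_pow {R : Type*} [CommRing R] (u : R) (r : ℕ) :
    (u + 1) ^ (r + 1) - u ^ (r + 1) = ∑ j ∈ range (r + 1), ((r + 1).choose j : R) * u ^ j := by
  rw [add_pow, sum_range_succ]
  simp [mul_comm]

lemma integral_pow_div {N : ℝ} (hN : N ≠ 0) (u : ℝ) (r : ℕ) :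
    ∫ t in u / N..(u + 1) / N, t ^ r =
      1 / ((r + 1) * N) *
        ∑ j ∈ range (r + 1), ((r + 1).choose j : ℝ) * (1 / N ^ (r - j)) * (u / N) ^ j := by
  rw [integral_pow, div_pow, div_pow, ← sub_div, add_one_pow_succ_sub_pow, sum_div, sum_div,
    mul_sum]
  refine sum_congr rfl fun j hj => ?_
  have hN' : N ^ (r + 1) = N * N ^ (r - j) * N ^ j := by
    rw [mul_assoc, ← pow_add, ← pow_succ',
      Nat.sub_add_cancel (Nat.lt_succ_iff.mp (mem_range.mp hj))]
  rw [hN', div_pow]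
  field_simp

lemma TMoment_eq {x : ℝ} (hx : 0 ≤ x) (a : ℝ) (n r : ℕ) :
    TMoment a n r x = (1 / ((r : ℝ) + 1)) *
      ∑ j ∈ range (r + 1),
        ((r + 1).choose j : ℝ) * (1 / ((n : ℝ) + 1) ^ (r - j)) * nuMoment a n j x := by
  have hN : (n : ℝ) + 1 ≠ 0 := by positivity
  have hterm (k : ℕ) :
      Wgb a n k x * ∫ t in (k : ℝ) / (n + 1)..((k : ℝ) + 1) / (n + 1), t ^ r =
      ∑ j ∈ range (r + 1), 1 / ((r + 1) * ((n : ℝ) + 1)) * ((r + 1).choose j : ℝ) *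
        (1 / ((n : ℝ) + 1) ^ (r - j)) * (Wgb a n k x * ((k : ℝ) / (n + 1)) ^ j) := by
    rw [integral_pow_div hN, mul_sum, mul_sum]
    exact sum_congr rfl fun j _ => by ring
  rw [TMoment, Kgb, tsum_congr hterm,
    Summable.tsum_finsetSum fun j _ => (summable_Wgb_mul_pow hx a n j).mul_left _, mul_sum, mul_sum]
  refine sum_congr rfl fun j _ => ?_
  rw [tsum_mul_left, nuMoment]
  field_simp

theorem statement16_general (a : ℝ) (n : ℕ) :
    (∀ r : ℕ, ∀ x : ℝ, 0 ≤ x →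
      TMoment a n r x = (1 / ((r : ℝ) + 1)) *
        ∑ j ∈ Finset.range (r + 1),
          ((r + 1).choose j : ℝ) * (1 / ((n : ℝ) + 1) ^ (r - j)) * nuMoment a n j x) ∧
    (∀ x : ℝ, 0 ≤ x → TMoment a n 0 x = 1) ∧
    (∀ x : ℝ, 0 ≤ x →
      TMoment a n 1 x = (1 / ((n : ℝ) + 1)) * ((n : ℝ) * x + a * x / (1 + x) + 1 / 2)) ∧
    (∀ x : ℝ, 0 ≤ x →
      TMoment a n 2 x = (1 / ((n : ℝ) + 1) ^ 2) *
        ((n : ℝ) ^ 2 * x ^ 2 + (n : ℝ) * (x ^ 2 + 2 * x + 2 * a * x ^ 2 / (1 + x)) +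
          a ^ 2 * x ^ 2 / (1 + x) ^ 2 + 2 * a * x / (1 + x) + 1 / 3)) := by
  refine ⟨fun r x hx => TMoment_eq hx a n r, fun x hx => ?_, fun x hx => ?_, fun x hx => ?_⟩
  all_goals
    simp only [TMoment_eq hx, sum_range_succ, sum_range_zero, nuMoment_zero hx, nuMoment_one hx,
      nuMoment_two hx, Nat.choose, Nat.cast_ofNat]
    field_simp
    ring

/-- formula for the moments `T_{n,r}^a` and particular values. -/
theorem statement16 (a : ℝ) (ha : 0 ≤ a) (n : ℕ) :
    (∀ r : ℕ, ∀ x : ℝ, 0 ≤ x →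
      TMoment a n r x = (1 / ((r : ℝ) + 1)) *
        ∑ j ∈ Finset.range (r + 1),
          ((r + 1).choose j : ℝ) * (1 / ((n : ℝ) + 1) ^ (r - j)) * nuMoment a n j x) ∧
    (∀ x : ℝ, 0 ≤ x → TMoment a n 0 x = 1) ∧
    (∀ x : ℝ, 0 ≤ x →
      TMoment a n 1 x = (1 / ((n : ℝ) + 1)) * ((n : ℝ) * x + a * x / (1 + x) + 1 / 2)) ∧
    (∀ x : ℝ, 0 ≤ x →
      TMoment a n 2 x = (1 / ((n : ℝ) + 1) ^ 2) *
        ((n : ℝ) ^ 2 * x ^ 2 + (n : ℝ) * (x ^ 2 + 2 * x + 2 * a * x ^ 2 / (1 + x)) +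
          a ^ 2 * x ^ 2 / (1 + x) ^ 2 + 2 * a * x / (1 + x) + 1 / 3)) :=
  statement16_general a n
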